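/- For the cycle graph Cₙ with n ≥ 3, the nim-number of the avoidance game is nim(DNG(Cₙ)) = 1 if n ≡ 1 or 2 (mod 4), and nim(DNG(Cₙ)) = 0 if n ≡ 0 or 3 (mod 4). -/

import Mathlib

open SimpleGraph

variable {V : Type*}

/-- `w` lies on a geodesic (shortest path) between `u` and `v` in `G`. -/
def OnGeodesic (G : SimpleGraph V) (u v w : V) : Prop :=
  ∃ p : G.Walk u v, p.IsPath ∧ p.length = G.dist u v ∧ w ∈ p.support

/-- A set of vertices is geodetically convex if it contains every vertex lying on a
geodesic between two of its elements. -/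
def GeoConvex (G : SimpleGraph V) (S : Set V) : Prop :=
  ∀ ⦃u⦄, u ∈ S → ∀ ⦃v⦄, v ∈ S → ∀ ⦃w⦄, OnGeodesic G u v w → w ∈ S

/-- The geodetic convex hull of a set of vertices: the smallest geodetically convex
set containing it. -/
def geoHull (G : SimpleGraph V) (S : Set V) : Set V :=
  ⋂₀ {K : Set V | S ⊆ K ∧ GeoConvex G K}

/-- A set of vertices is generating if its convex hull is the whole vertex set. -/
def GeoGenerates (G : SimpleGraph V) (S : Set V) : Prop :=
  geoHull G S = Set.univ

/-- A maximal nongenerating set: a nongenerating set not properly contained in any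
nongenerating set.  The family of these is `𝒩(G)`. -/
def MaxNongen (G : SimpleGraph V) (N : Set V) : Prop :=
  ¬ GeoGenerates G N ∧ ∀ M : Set V, ¬ GeoGenerates G M → N ⊆ M → N = M

/-- The Frattini subset `Φ(G)`: the intersection of all maximal nongenerating sets. -/
def geoFrattini (G : SimpleGraph V) : Set V :=
  ⋂₀ {N : Set V | MaxNongen G N}

/-- A vertex is simplicial if its neighbors induce a complete graph. -/
def Simplicial (G : SimpleGraph V) (v : V) : Prop :=
  ∀ ⦃u w : V⦄, G.Adj v u → G.Adj v w → u ≠ w → G.Adj u w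

/-- A minimal generating set: a generating set no proper subset of which generates.
The family of these is `𝒢(G)`. -/
def MinGen (G : SimpleGraph V) (L : Set V) : Prop :=
  GeoGenerates G L ∧ ∀ M : Set V, GeoGenerates G M → M ⊆ L → M = L

/-- The minimum excludant of a set of natural numbers. -/
noncomputable def natMex (A : Set ℕ) : ℕ := sInf {n : ℕ | n ∉ A}

variable [Fintype V] [DecidableEq V]

/-- Nim-value of a position `P` of the avoidance game `DNG(G)`, computed with fuel:
the options of a position `P` are the sets `insert v P` with `v ∉ P` that are
nongenerating, and the value is the minimum excludant of the values of the options.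
The fuel (first argument) tracks the number of unselected vertices, so it never
runs out along actual plays. -/
noncomputable def dngAux (G : SimpleGraph V) : ℕ → Finset V → ℕ
  | 0, _ => 0
  | k + 1, P => natMex {m : ℕ | ∃ v : V, v ∉ P ∧
      ¬ GeoGenerates G (↑(insert v P) : Set V) ∧ m = dngAux G k (insert v P)}

/-- The nim-number of the avoidance game `DNG(G)`: the nim-value of the starting
position `∅`. -/
noncomputable def dngNim (G : SimpleGraph V) : ℕ := dngAux G (Fintype.card V) ∅

open scoped Classical in
/-- Nim-value of a position `P` of the achievement game `GEN(G)`, computed with fuel: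
generating positions are terminal (value `0 = mex ∅`), and the options of a
nongenerating position `P` are all sets `insert v P` with `v ∉ P`. -/
noncomputable def genAux (G : SimpleGraph V) : ℕ → Finset V → ℕ
  | 0, _ => 0
  | k + 1, P =>
      if GeoGenerates G (↑P : Set V) then 0
      else natMex {m : ℕ | ∃ v : V, v ∉ P ∧ m = genAux G k (insert v P)}

/-- The nim-number of the achievement game `GEN(G)`: the nim-value of the starting
position `∅`. -/
noncomputable def genNim (G : SimpleGraph V) : ℕ := genAux G (Fintype.card V) ∅

set_option linter.unusedSectionVars false
section CycleNim

open scoped Fin.NatCast Fin.CommRing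

private lemma natMex_empty' : natMex (∅ : Set ℕ) = 0 :=
  Nat.sInf_eq_zero.mpr (Or.inl (by simp))

private lemma natMex_singleton_zero' : natMex ({0} : Set ℕ) = 1 := by
  have h : IsLeast {k : ℕ | k ∉ ({0} : Set ℕ)} 1 := by
    constructor
    · simp
    · intro b hb
      simp only [Set.mem_setOf_eq, Set.mem_singleton_iff] at hb
      omega
  exact h.csInf_eq

private lemma natMex_singleton_one' : natMex ({1} : Set ℕ) = 0 :=
  Nat.sInf_eq_zero.mpr (Or.inl (by simp))

private lemma subset_geoHull' {W : Type*} (G : SimpleGraph W) (S : Set W) :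
    S ⊆ geoHull G S := by
  intro x hx
  rw [geoHull, Set.mem_sInter]
  exact fun K hK => hK.1 hx

private lemma geoHull_convex' {W : Type*} (G : SimpleGraph W) (S : Set W) :
    GeoConvex G (geoHull G S) := by
  intro u hu v hv w hw
  rw [geoHull, Set.mem_sInter] at *
  intro K hK
  exact hK.2 (hu K hK) (hv K hK) hw

private lemma geoHull_subset' {W : Type*} {G : SimpleGraph W} {S K : Set W}
    (h1 : S ⊆ K) (h2 : GeoConvex G K) : geoHull G S ⊆ K := by
  intro x hx
  rw [geoHull, Set.mem_sInter] at hx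
  exact hx K ⟨h1, h2⟩

private lemma OnGeodesic.symm' {W : Type*} {G : SimpleGraph W} {u v w : W}
    (h : OnGeodesic G u v w) : OnGeodesic G v u w := by
  obtain ⟨p, hp, hl, hw⟩ := h
  refine ⟨p.reverse, hp.reverse, ?_, ?_⟩
  · rw [SimpleGraph.Walk.length_reverse, hl, SimpleGraph.dist_comm]
  · rw [SimpleGraph.Walk.support_reverse]
    exact List.mem_reverse.mpr hw

variable {n : ℕ} [NeZero n]

private lemma fin_add_val (a b : Fin n) : (a + b).val = (a.val + b.val) % n := by
  rw [Fin.add_def]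

private lemma fin_sub_val (a b : Fin n) : (a - b).val = (n - b.val + a.val) % n := by
  rw [Fin.sub_def]

private lemma fin_natCast_val (t : ℕ) : ((t : Fin n)).val = t % n := by
  simp [Fin.val_natCast]

private lemma fin_sub_val_of_le {a b : Fin n} (h : b.val ≤ a.val) :
    (a - b).val = a.val - b.val := by
  have hb := b.isLt; have ha := a.isLt
  rw [fin_sub_val]
  have h2 : n - b.val + a.val = (a.val - b.val) + n := by omega
  rw [h2, Nat.add_mod_right, Nat.mod_eq_of_lt (by omega)]

private lemma fin_sub_val_of_lt {a b : Fin n} (h : a.val < b.val) :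
    (a - b).val = a.val + n - b.val := by
  have hb := b.isLt
  rw [fin_sub_val, Nat.mod_eq_of_lt (by omega)]
  omega

private lemma fin_eq_zero_iff (a : Fin n) : a = 0 ↔ a.val = 0 := by
  rw [Fin.ext_iff]
  simp

private lemma fin_sub_val_add {u v : Fin n} (h : u ≠ v) :
    (v - u).val + (u - v).val = n := by
  have h' : u.val ≠ v.val := fun hh => h (Fin.ext hh)
  have hu := u.isLt; have hv := v.isLt
  rcases lt_or_gt_of_ne h' with hlt | hlt
  · rw [fin_sub_val_of_le (le_of_lt hlt), fin_sub_val_of_lt hlt]; omega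
  · rw [fin_sub_val_of_lt hlt, fin_sub_val_of_le (le_of_lt hlt)]; omega

private lemma fin_val_one' (hn : 3 ≤ n) : ((1 : Fin n)).val = 1 := by
  rw [← Nat.cast_one, fin_natCast_val, Nat.mod_eq_of_lt (by omega)]

private lemma cycle_adj_succ (hn : 3 ≤ n) (u : Fin n) :
    (SimpleGraph.cycleGraph n).Adj u (u + 1) := by
  rw [SimpleGraph.cycleGraph_adj']
  right
  have h1 : u + 1 - u = 1 := by ring
  rw [h1, fin_val_one' hn]

private lemma exists_upWalk (hn : 3 ≤ n) (u v : Fin n) (k : ℕ) (hk : k < n)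
    (hv : u + (k : Fin n) = v) :
    ∃ p : (SimpleGraph.cycleGraph n).Walk u v, p.length = k ∧
      ∀ w, w ∈ p.support ↔ ∃ t ≤ k, w = u + (t : Fin n) := by
  induction k generalizing u v with
  | zero =>
    have : u = v := by rw [← hv]; push_cast; ring
    subst this
    refine ⟨SimpleGraph.Walk.nil, rfl, ?_⟩
    intro w
    simp only [SimpleGraph.Walk.support_nil, List.mem_singleton]
    constructor
    · rintro rfl; exact ⟨0, le_refl _, by push_cast; ring⟩
    · rintro ⟨t, ht, rfl⟩
      interval_cases t
      push_cast; ring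
  | succ k ih =>
    have hv' : (u + 1) + (k : Fin n) = v := by
      rw [← hv]; push_cast; ring
    obtain ⟨q, hql, hqs⟩ := ih (u + 1) v (by omega) hv'
    refine ⟨SimpleGraph.Walk.cons (cycle_adj_succ hn u) q, by simp [hql], ?_⟩
    intro w
    simp only [SimpleGraph.Walk.support_cons, List.mem_cons]
    constructor
    · rintro (rfl | hw)
      · exact ⟨0, by omega, by push_cast; ring⟩
      · obtain ⟨t, ht, rfl⟩ := (hqs w).mp hw
        exact ⟨t + 1, by omega, by push_cast; ring⟩
    · rintro ⟨t, ht, rfl⟩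
      rcases Nat.eq_zero_or_pos t with rfl | htpos
      · left; push_cast; ring
      · right
        apply (hqs _).mpr
        refine ⟨t - 1, by omega, ?_⟩
        have : t = (t - 1) + 1 := by omega
        rw [this]; push_cast; ring

private lemma cycle_walk_le (hn : 3 ≤ n) (u v : Fin n) :
    ∃ p : (SimpleGraph.cycleGraph n).Walk u v, p.length = (v - u).val := by
  obtain ⟨p, hl, _⟩ := exists_upWalk hn u v ((v - u).val) (v - u).isLt
    (by rw [Fin.cast_val_eq_self]; ring)
  exact ⟨p, hl⟩

private lemma cycle_connected (hn : 3 ≤ n) : (SimpleGraph.cycleGraph n).Connected := by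
  rw [SimpleGraph.connected_iff]
  refine ⟨fun a b => ?_, ⟨0⟩⟩
  obtain ⟨q, _⟩ := cycle_walk_le hn a b
  exact q.reachable

private lemma cycle_adj_posZ (hn : 3 ≤ n) {z x y : Fin n}
    (h : (SimpleGraph.cycleGraph n).Adj x y) (hx : x ≠ z) (hy : y ≠ z) :
    ((y - z).val : ℤ) = (x - z).val + 1 ∨ ((y - z).val : ℤ) = (x - z).val - 1 := by
  have key : ∀ a b : Fin n, b = a + 1 → a ≠ z → b ≠ z →
      ((b - z).val : ℤ) = (a - z).val + 1 := by
    intro a b hb ha hbz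
    have h1 : b - z = (a - z) + 1 := by rw [hb]; ring
    have h3 : (a - z) + 1 ≠ 0 := by rw [← h1]; exact sub_ne_zero.mpr hbz
    have h4 := (a - z).isLt
    have h5 : ((a - z) + 1).val = ((a - z).val + 1) % n := by
      rw [fin_add_val, fin_val_one' hn]
    by_cases h6 : (a - z).val + 1 = n
    · exfalso
      apply h3
      rw [fin_eq_zero_iff, h5, h6, Nat.mod_self]
    · have h7 : ((a - z) + 1).val = (a - z).val + 1 := by
        rw [h5, Nat.mod_eq_of_lt (by omega)]
      rw [h1, h7]; push_cast; ring
  rw [SimpleGraph.cycleGraph_adj'] at h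
  rcases h with h | h
  · right
    have hxy : x = y + 1 := by
      have h2 : x - y = 1 := by
        apply Fin.ext; rw [h, fin_val_one' hn]
      rw [← h2]; ring
    have := key y x hxy hy hx
    omega
  · left
    have hyx : y = x + 1 := by
      have h2 : y - x = 1 := by
        apply Fin.ext; rw [h, fin_val_one' hn]
      rw [← h2]; ring
    exact key x y hyx hx hy

private lemma cycle_walk_bound (hn : 3 ≤ n) {x y : Fin n}
    (p : (SimpleGraph.cycleGraph n).Walk x y) (z : Fin n) (hz : z ∉ p.support) :
    |((y - z).val : ℤ) - ((x - z).val : ℤ)| ≤ (p.length : ℤ) := by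
  induction p with
  | nil => simp
  | @cons a b c h q ih =>
    rw [SimpleGraph.Walk.support_cons, List.mem_cons] at hz
    push_neg at hz
    obtain ⟨hza, hzq⟩ := hz
    have hzb : z ≠ b := fun hh => hzq (hh ▸ q.start_mem_support)
    have step := cycle_adj_posZ hn h (Ne.symm hza) (Ne.symm hzb)
    have ihh := ih hzq
    rw [SimpleGraph.Walk.length_cons]
    rw [abs_le] at ihh ⊢
    push_cast
    rcases step with h1 | h1 <;> constructor <;> omega

private lemma cycle_dist (hn : 3 ≤ n) (u v : Fin n) :
    (SimpleGraph.cycleGraph n).dist u v = min ((v - u).val) ((u - v).val) := by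
  rcases eq_or_ne u v with rfl | hne
  · simp
  · have hsum := fin_sub_val_add hne
    obtain ⟨p1, hp1⟩ := cycle_walk_le hn u v
    obtain ⟨p2, hp2⟩ := cycle_walk_le hn v u
    have hub : (SimpleGraph.cycleGraph n).dist u v ≤ min ((v - u).val) ((u - v).val) := by
      apply le_min
      · exact hp1 ▸ SimpleGraph.dist_le p1
      · rw [SimpleGraph.dist_comm]; exact hp2 ▸ SimpleGraph.dist_le p2
    refine le_antisymm hub ?_
    obtain ⟨p, hp⟩ := p1.reachable.exists_walk_length_eq_dist
    have hmin1 : min ((v - u).val) ((u - v).val) ≤ (v - u).val := min_le_left _ _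
    have hmin2 : min ((v - u).val) ((u - v).val) ≤ (u - v).val := min_le_right _ _
    have hcard : p.support.toFinset.card < n := by
      have c1 : p.support.toFinset.card ≤ p.support.length := p.support.toFinset_card_le
      have c2 := SimpleGraph.Walk.length_support p
      have c3 : (SimpleGraph.cycleGraph n).dist u v ≤ min ((v - u).val) ((u - v).val) := hub
      omega
    obtain ⟨z, hz⟩ : ∃ z, z ∉ p.support := by
      by_contra hcon
      push_neg at hcon
      have huniv : p.support.toFinset = Finset.univ :=
        Finset.eq_univ_iff_forall.mpr (fun x => List.mem_toFinset.mpr (hcon x))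
      rw [huniv, Finset.card_univ, Fintype.card_fin] at hcard
      omega
    have hb := cycle_walk_bound hn p z hz
    rw [← hp]
    rw [abs_le] at hb
    rcases le_or_gt (u - z).val (v - z).val with hle | hlt
    · have he : v - u = (v - z) - (u - z) := by ring
      have h2 : (v - u).val = (v - z).val - (u - z).val := by rw [he, fin_sub_val_of_le hle]
      have h3 : ((v - u).val : ℤ) ≤ p.length := by
        have := hb.2
        have hz2 : ((v - z).val : ℤ) - ((u - z).val : ℤ) = ((v - u).val : ℤ) := by
          rw [h2]; push_cast [hle]; ring
        omega
      have h4 : (v - u).val ≤ p.length := by exact_mod_cast h3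
      omega
    · have he : u - v = (u - z) - (v - z) := by ring
      have h2 : (u - v).val = (u - z).val - (v - z).val := by
        rw [he, fin_sub_val_of_le (le_of_lt hlt)]
      have h3 : ((u - v).val : ℤ) ≤ p.length := by
        have := hb.1
        have hz2 : ((u - z).val : ℤ) - ((v - z).val : ℤ) = ((u - v).val : ℤ) := by
          rw [h2]; push_cast [le_of_lt hlt]; ring
        omega
      have h4 : (u - v).val ≤ p.length := by exact_mod_cast h3
      omega

private lemma cycle_dist_split (hn : 3 ≤ n) {u v w : Fin n}
    (p : (SimpleGraph.cycleGraph n).Walk u v)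
    (hp : p.length = (SimpleGraph.cycleGraph n).dist u v) (hw : w ∈ p.support) :
    (SimpleGraph.cycleGraph n).dist u w + (SimpleGraph.cycleGraph n).dist w v
      = (SimpleGraph.cycleGraph n).dist u v := by
  have hconn := cycle_connected hn
  have h1 := SimpleGraph.dist_le (p.takeUntil w hw)
  have h2 := SimpleGraph.dist_le (p.dropUntil w hw)
  have h3 : (p.takeUntil w hw).length + (p.dropUntil w hw).length = p.length := by
    rw [← SimpleGraph.Walk.length_append, SimpleGraph.Walk.take_spec]
  have h4 := hconn.dist_triangle (u := u) (v := w) (w := v)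
  omega

private def arcSet (c : Fin n) (k : ℕ) : Set (Fin n) := {x | (x - c).val < k}

private lemma mem_arcSet {c x : Fin n} {k : ℕ} : x ∈ arcSet c k ↔ (x - c).val < k :=
  Iff.rfl

private def arcFinset (c : Fin n) (k : ℕ) : Finset (Fin n) :=
  (Finset.range k).image (fun t : ℕ => c + (t : Fin n))

private lemma mem_arcFinset {c : Fin n} {k : ℕ} (hk : k ≤ n) (x : Fin n) :
    x ∈ arcFinset c k ↔ x ∈ arcSet c k := by
  simp only [arcFinset, Finset.mem_image, Finset.mem_range, arcSet, Set.mem_setOf_eq]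
  constructor
  · rintro ⟨t, ht, rfl⟩
    have h1 : (c + (t : Fin n)) - c = (t : Fin n) := by ring
    rw [h1, fin_natCast_val, Nat.mod_eq_of_lt (by omega)]
    exact ht
  · intro hx
    exact ⟨(x - c).val, hx, by rw [Fin.cast_val_eq_self]; ring⟩

private lemma card_arcFinset (c : Fin n) {k : ℕ} (hk : k ≤ n) :
    (arcFinset c k).card = k := by
  rw [arcFinset, Finset.card_image_of_injOn, Finset.card_range]
  intro t1 h1 t2 h2 heq
  simp only [Finset.coe_range, Set.mem_Iio] at h1 h2
  have h3 : (t1 : Fin n) = (t2 : Fin n) := add_left_cancel heq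
  have h4 : t1 % n = t2 % n := by
    rw [← fin_natCast_val (n := n) t1, ← fin_natCast_val (n := n) t2, h3]
  rwa [Nat.mod_eq_of_lt (by omega), Nat.mod_eq_of_lt (by omega)] at h4

private lemma arc_convex_aux (hn : 3 ≤ n) {c u v w : Fin n}
    (hu : (u - c).val < (n + 1) / 2) (hv : (v - c).val < (n + 1) / 2)
    (hij : (u - c).val ≤ (v - c).val)
    (hgeo : OnGeodesic (SimpleGraph.cycleGraph n) u v w) :
    (w - c).val < (n + 1) / 2 := by
  obtain ⟨p, hpath, hlen, hwsup⟩ := hgeo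
  rcases eq_or_ne u v with rfl | hne
  · have h0 : p.length = 0 := by rw [hlen, SimpleGraph.dist_self]
    have hs := SimpleGraph.Walk.length_support p
    rw [h0] at hs
    obtain ⟨a, ha⟩ := List.length_eq_one_iff.mp hs
    rw [ha, List.mem_singleton] at hwsup
    have hu' := p.start_mem_support
    rw [ha, List.mem_singleton] at hu'
    rw [hwsup, ← hu']
    exact hu
  rcases eq_or_ne w u with rfl | hwu
  · exact hu
  rcases eq_or_ne w v with rfl | hwv
  · exact hv
  have hvu : (v - u).val = (v - c).val - (u - c).val := by
    have hvueq : v - u = (v - c) - (u - c) := by ring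
    rw [hvueq, fin_sub_val_of_le hij]
  have hij' : (u - c).val < (v - c).val := by
    rcases eq_or_lt_of_le hij with he | h
    · exfalso
      apply hne
      have h1 : (v - u).val = 0 := by omega
      have h2 : v - u = 0 := by rw [fin_eq_zero_iff]; exact h1
      exact (sub_eq_zero.mp h2).symm
    · exact h
  set i := (u - c).val with hidef
  set j := (v - c).val with hjdef
  have hsum := fin_sub_val_add hne
  have ha2 : 2 * (j - i) < n := by omega
  have hdist : (SimpleGraph.cycleGraph n).dist u v = j - i := by
    rw [cycle_dist hn]
    omega
  have hsplit := cycle_dist_split hn p hlen hwsup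
  set x := (w - u).val with hxdef
  set y := (v - w).val with hydef
  have hsx := fin_sub_val_add hwu.symm
  have hsy := fin_sub_val_add hwv
  have hx0 : x ≠ 0 := by
    intro h0
    exact hwu (sub_eq_zero.mp ((fin_eq_zero_iff _).mpr h0))
  have hy0 : y ≠ 0 := by
    intro h0
    apply hwv
    exact (sub_eq_zero.mp ((fin_eq_zero_iff _).mpr h0)).symm
  have hdx : (SimpleGraph.cycleGraph n).dist u w = min x (n - x) := by
    rw [cycle_dist hn]
    omega
  have hdy : (SimpleGraph.cycleGraph n).dist w v = min y (n - y) := by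
    rw [cycle_dist hn]
    omega
  have hxy : x + y = (j - i) ∨ x + y = (j - i) + n := by
    have he : (w - u) + (v - w) = v - u := by ring
    have h2 : (x + y) % n = (v - u).val := by rw [← he, fin_add_val]
    have hxl := (w - u).isLt
    have hyl := (v - w).isLt
    rcases lt_or_ge (x + y) n with hlt | hge
    · left
      rw [Nat.mod_eq_of_lt hlt] at h2
      omega
    · right
      rw [Nat.mod_eq_sub_mod hge, Nat.mod_eq_of_lt (by omega)] at h2
      omega
  have hxa : x ≤ j - i ∧ x + y = j - i := by omega
  have hwc : (w - c).val = i + x := by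
    have he : w - c = (u - c) + (w - u) := by ring
    rw [he, fin_add_val, ← hidef, ← hxdef, Nat.mod_eq_of_lt (by omega)]
  omega

private lemma arc_convex (hn : 3 ≤ n) (c : Fin n) :
    GeoConvex (SimpleGraph.cycleGraph n) (arcSet c ((n + 1) / 2)) := by
  intro u hu v hv w hw
  rcases le_total ((u - c).val) ((v - c).val) with h | h
  · exact arc_convex_aux hn hu hv h hw
  · exact arc_convex_aux hn hv hu h (OnGeodesic.symm' hw)

private lemma convex_subset_arc (hn : 3 ≤ n) {S : Set (Fin n)}
    (hconv : GeoConvex (SimpleGraph.cycleGraph n) S) (hne : S ≠ Set.univ) :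
    ∃ c, S ⊆ arcSet c ((n + 1) / 2) := by
  classical
  rcases S.eq_empty_or_nonempty with rfl | ⟨s0, hs0⟩
  · exact ⟨0, Set.empty_subset _⟩
  obtain ⟨z, hz⟩ : ∃ z, z ∉ S := by
    by_contra hcon
    push_neg at hcon
    exact hne (Set.eq_univ_iff_forall.mpr hcon)
  set T : Finset (Fin n) := Finset.univ.filter (· ∈ S) with hT
  have hTmem : ∀ x, x ∈ T ↔ x ∈ S := by
    intro x; simp [hT]
  have hTne : T.Nonempty := ⟨s0, (hTmem s0).mpr hs0⟩
  obtain ⟨u, huT, humin⟩ := T.exists_min_image (fun x => (x - z).val) hTne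
  obtain ⟨v, hvT, hvmax⟩ := T.exists_max_image (fun x => (x - z).val) hTne
  have huS : u ∈ S := (hTmem u).mp huT
  have hvS : v ∈ S := (hTmem v).mp hvT
  set i := (u - z).val with hidef
  set j := (v - z).val with hjdef
  have hij : i ≤ j := hvmax u huT
  have hi1 : 1 ≤ i := by
    rcases Nat.eq_zero_or_pos i with h0 | h
    · exfalso
      apply hz
      have : u - z = 0 := by rw [fin_eq_zero_iff]; exact h0
      have : u = z := sub_eq_zero.mp this
      rwa [← this]
    · exact h
  have hjn : j < n := (v - z).isLt
  have hvu : (v - u).val = j - i := by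
    have he : v - u = (v - z) - (u - z) := by ring
    rw [he, fin_sub_val_of_le hij]
  rcases lt_or_ge (2 * (j - i)) n with hcase | hcase
  · refine ⟨u, fun s hs => ?_⟩
    have hsT := (hTmem s).mpr hs
    have h1 : i ≤ (s - z).val := humin s hsT
    have h2 : (s - z).val ≤ j := hvmax s hsT
    have h3 : (s - u).val = (s - z).val - i := by
      have he : s - u = (s - z) - (u - z) := by ring
      rw [he, fin_sub_val_of_le h1]
    rw [mem_arcSet]
    omega
  · exfalso
    have hji2 : 2 ≤ j - i := by omega
    have hij' : i < j := by omega
    have hne2 : v ≠ u := by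
      intro he
      have : i = j := by rw [hidef, hjdef, he]
      omega
    set k := n - (j - i) with hkdef
    have huv : (u - v).val = k := by
      have he : u - v = (u - z) - (v - z) := by ring
      rw [he, fin_sub_val_of_lt hij']
      omega
    have hvk : v + ((k : ℕ) : Fin n) = u := by
      rw [← huv, Fin.cast_val_eq_self]; ring
    obtain ⟨q, hqlen, hqsup⟩ := exists_upWalk hn v u k (by omega) hvk
    have hqdist : q.length = (SimpleGraph.cycleGraph n).dist v u := by
      rw [hqlen, cycle_dist hn, huv, hvu]
      omega
    have hzq : z ∈ q.support := by
      apply (hqsup z).mpr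
      refine ⟨n - j, by omega, ?_⟩
      have h5 : z + ((j : ℕ) : Fin n) = v := by
        rw [hjdef, Fin.cast_val_eq_self]; ring
      have h6 : v + (((n - j) : ℕ) : Fin n) = z := by
        rw [← h5, add_assoc, ← Nat.cast_add]
        rw [show j + (n - j) = n from by omega, Fin.natCast_self, add_zero]
      exact h6.symm
    exact hz (hconv hvS huS ⟨q, q.isPath_of_length_eq_dist hqdist, hqdist, hzq⟩)

private lemma nongen_iff (hn : 3 ≤ n) (P : Set (Fin n)) :
    ¬ GeoGenerates (SimpleGraph.cycleGraph n) P ↔ ∃ c, P ⊆ arcSet c ((n + 1) / 2) := by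
  constructor
  · intro h
    obtain ⟨c, hc⟩ := convex_subset_arc hn (geoHull_convex' (SimpleGraph.cycleGraph n) P) h
    exact ⟨c, (subset_geoHull' _ _).trans hc⟩
  · rintro ⟨c, hc⟩ hgen
    have hsub : geoHull (SimpleGraph.cycleGraph n) P ⊆ arcSet c ((n + 1) / 2) :=
      geoHull_subset' hc (arc_convex hn c)
    rw [GeoGenerates] at hgen
    have hmem : (c + ((((n + 1) / 2) : ℕ) : Fin n)) ∈ arcSet c ((n + 1) / 2) := by
      apply hsub
      rw [hgen]
      trivial
    rw [mem_arcSet] at hmem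
    have he : c + ((((n + 1) / 2) : ℕ) : Fin n) - c = ((((n + 1) / 2) : ℕ) : Fin n) := by ring
    rw [he, fin_natCast_val, Nat.mod_eq_of_lt (by omega)] at hmem
    omega

private lemma nongen_card_le (hn : 3 ≤ n) {P : Finset (Fin n)}
    (h : ¬ GeoGenerates (SimpleGraph.cycleGraph n) (P : Set (Fin n))) :
    P.card ≤ (n + 1) / 2 := by
  obtain ⟨c, hc⟩ := (nongen_iff hn _).mp h
  have hsub : P ⊆ arcFinset c ((n + 1) / 2) := fun x hx =>
    (mem_arcFinset (by omega) x).mpr (hc hx)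
  have := Finset.card_le_card hsub
  rwa [card_arcFinset c (by omega)] at this

private lemma nongen_extend (hn : 3 ≤ n) {P : Finset (Fin n)}
    (h : ¬ GeoGenerates (SimpleGraph.cycleGraph n) (P : Set (Fin n)))
    (hcard : P.card < (n + 1) / 2) :
    ∃ v, v ∉ P ∧
      ¬ GeoGenerates (SimpleGraph.cycleGraph n) ((insert v P : Finset (Fin n)) : Set (Fin n)) := by
  obtain ⟨c, hc⟩ := (nongen_iff hn _).mp h
  have hsub : P ⊆ arcFinset c ((n + 1) / 2) := fun x hx =>
    (mem_arcFinset (by omega) x).mpr (hc hx)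
  obtain ⟨v, hvA, hvP⟩ : ∃ v ∈ arcFinset c ((n + 1) / 2), v ∉ P := by
    by_contra hcon
    push_neg at hcon
    have h1 : arcFinset c ((n + 1) / 2) ⊆ P := hcon
    have h2 := Finset.card_le_card h1
    rw [card_arcFinset c (by omega)] at h2
    omega
  refine ⟨v, hvP, (nongen_iff hn _).mpr ⟨c, ?_⟩⟩
  rw [Finset.coe_insert]
  exact Set.insert_subset ((mem_arcFinset (by omega) v).mp hvA) hc

private lemma dngAux_eq (hn : 3 ≤ n) :
    ∀ (k : ℕ) (P : Finset (Fin n)),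
      ¬ GeoGenerates (SimpleGraph.cycleGraph n) (P : Set (Fin n)) →
      (n + 1) / 2 ≤ P.card + k →
      dngAux (SimpleGraph.cycleGraph n) k P = ((n + 1) / 2 - P.card) % 2 := by
  intro k
  induction k with
  | zero =>
    intro P hP hk
    have h1 := nongen_card_le hn hP
    have h2 : P.card = (n + 1) / 2 := by omega
    rw [dngAux, h2, Nat.sub_self]
  | succ k ih =>
    intro P hP hk
    have hle := nongen_card_le hn hP
    rcases eq_or_lt_of_le hle with heq | hlt
    · have hempty : {m : ℕ | ∃ v : Fin n, v ∉ P ∧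
          ¬ GeoGenerates (SimpleGraph.cycleGraph n) (↑(insert v P) : Set (Fin n)) ∧
          m = dngAux (SimpleGraph.cycleGraph n) k (insert v P)} = ∅ := by
        ext r
        simp only [Set.mem_setOf_eq, Set.mem_empty_iff_false, iff_false]
        rintro ⟨v, hv, hng, -⟩
        have hc := nongen_card_le hn hng
        rw [Finset.card_insert_of_notMem hv] at hc
        omega
      rw [dngAux, hempty, natMex_empty', heq, Nat.sub_self]
    · obtain ⟨v₀, hv₀, hng₀⟩ := nongen_extend hn hP hlt
      have hset : {m : ℕ | ∃ v : Fin n, v ∉ P ∧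
          ¬ GeoGenerates (SimpleGraph.cycleGraph n) (↑(insert v P) : Set (Fin n)) ∧
          m = dngAux (SimpleGraph.cycleGraph n) k (insert v P)}
          = {((n + 1) / 2 - (P.card + 1)) % 2} := by
        ext r
        simp only [Set.mem_setOf_eq, Set.mem_singleton_iff]
        constructor
        · rintro ⟨v, hv, hng, rfl⟩
          rw [ih (insert v P) hng (by rw [Finset.card_insert_of_notMem hv]; omega)]
          rw [Finset.card_insert_of_notMem hv]
        · rintro rfl
          refine ⟨v₀, hv₀, hng₀, ?_⟩
          rw [ih (insert v₀ P) hng₀ (by rw [Finset.card_insert_of_notMem hv₀]; omega)]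
          rw [Finset.card_insert_of_notMem hv₀]
      rw [dngAux, hset]
      rcases Nat.even_or_odd ((n + 1) / 2 - P.card) with he | ho
      · have h1 : ((n + 1) / 2 - (P.card + 1)) % 2 = 1 := by
          rcases he with ⟨c, hc⟩
          omega
        have h2 : ((n + 1) / 2 - P.card) % 2 = 0 := by
          rcases he with ⟨c, hc⟩
          omega
        rw [h1, h2, natMex_singleton_one']
      · have h1 : ((n + 1) / 2 - (P.card + 1)) % 2 = 0 := by
          rcases ho with ⟨c, hc⟩
          omega
        have h2 : ((n + 1) / 2 - P.card) % 2 = 1 := by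
          rcases ho with ⟨c, hc⟩
          omega
        rw [h1, h2, natMex_singleton_zero']

end CycleNim

/-- For the cycle graph `Cₙ` with `n ≥ 3`, the nim-number of the avoidance
game is `1` when `n ≡ 1, 2 (mod 4)` and `0` when `n ≡ 0, 3 (mod 4)`. -/
theorem dngNim_cycleGraph (n : ℕ) (hn : 3 ≤ n) :
    dngNim (SimpleGraph.cycleGraph n) =
      if n % 4 = 1 ∨ n % 4 = 2 then 1 else 0 := by
  haveI : NeZero n := ⟨by omega⟩
  have hempty : ¬ GeoGenerates (SimpleGraph.cycleGraph n)
      ((∅ : Finset (Fin n)) : Set (Fin n)) := by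
    apply (nongen_iff hn _).mpr
    exact ⟨0, by simp⟩
  have hmain := dngAux_eq hn (Fintype.card (Fin n)) ∅ hempty
    (by rw [Fintype.card_fin]; simp; omega)
  rw [dngNim, hmain, Finset.card_empty, Nat.sub_zero]
  split_ifs with h <;> omega
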